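/- arXiv:2503.03248 — 2 statements merged into one kernel-verified Lean document; each statement's English description precedes it below -/
import Mathlib

section
/- Let f : ℝ → ℂ be a twice differentiable function satisfying -f'' + qf = λf for a continuous function q : ℝ → ℂ, where λ, ω ∈ ℂ, λ ≠ 0, and s² = λ² + ω². Then F(x) := V₊ · f(x), where V₊ = (1/(2λ))·[[s, λ+iω],[λ-iω, s]], satisfies -εF'' + QF = sF with Q(x) = [[0, q(x)+iω],[q(x)-iω, 0]] and ε = [[0,1],[1,0]]. -/
attribute [local instance] Matrix.normedAddCommGroup Matrix.normedSpace

open Matrix Complex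

/-- If `f` is a twice differentiable solution of `-f'' + qf = λf` and
`s² = λ² + ω²`, `λ ≠ 0`, then `F(x) = f(x)·V₊`, with
`V₊ = (1/(2λ))[[s, λ+iω],[λ-iω, s]]`, satisfies `-εF'' + QF = sF`, where
`Q(x) = [[0, q(x)+iω],[q(x)-iω, 0]]` and `ε = [[0,1],[1,0]]`. -/
theorem scalar_to_matrix_solution
    (q : ℝ → ℂ) (hq : Continuous q) (lam s ω : ℂ) (hlam : lam ≠ 0)
    (hs : s ^ 2 = lam ^ 2 + ω ^ 2)
    (f : ℝ → ℂ) (hf1 : Differentiable ℝ f) (hf2 : Differentiable ℝ (deriv f))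
    (hfeq : ∀ x : ℝ, -(deriv (deriv f) x) + q x * f x = lam * f x) :
    let ε : Matrix (Fin 2) (Fin 2) ℂ := !![0, 1; 1, 0]
    let Vp : Matrix (Fin 2) (Fin 2) ℂ :=
      (1 / (2 * lam)) • !![s, lam + Complex.I * ω; lam - Complex.I * ω, s]
    let Q : ℝ → Matrix (Fin 2) (Fin 2) ℂ :=
      fun x => !![0, q x + Complex.I * ω; q x - Complex.I * ω, 0]
    let F : ℝ → Matrix (Fin 2) (Fin 2) ℂ := fun x => f x • Vp
    ∀ x : ℝ, -(ε * deriv (deriv F) x) + Q x * F x = s • F x := by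
  intro ε Vp Q F x
  have hF : deriv F = fun y => deriv f y • Vp := by
    funext y
    exact deriv_smul_const (hf1 y) Vp
  have hF2 : deriv (deriv F) x = deriv (deriv f) x • Vp := by
    rw [hF]
    exact deriv_smul_const (hf2 x) Vp
  have hkey : deriv (deriv f) x = q x * f x - lam * f x := by
    have := hfeq x; linear_combination -this
  rw [hF2, hkey]
  show -(ε * ((q x * f x - lam * f x) • Vp)) + Q x * (f x • Vp) = s • (f x • Vp)
  ext i j
  fin_cases i <;> fin_cases j <;>
      simp [ε, Vp, Q, Matrix.mul_apply, Fin.sum_univ_succ, Matrix.smul_apply] <;>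
      field_simp <;> ring_nf <;>
    first
      | linear_combination (f x * s - 4*f x*lam^2 - f x*Complex.I*ω) * hs +
          (-(4*f x*lam^2*ω^2)) * Complex.I_sq
      | linear_combination (f x * s - 4*f x*lam^2 + f x*Complex.I*ω) * hs +
          (-(4*f x*lam^2*ω^2)) * Complex.I_sq
      | linear_combination (-(4*f x*lam^2)) * hs + (-(4*f x*lam^2*ω^2)) * Complex.I_sq
      | linear_combination (-(f x)) * hs + (-(f x*ω^2)) * Complex.I_sq
end

section
/- Let A₁₁, A₁₂, A₂₁, A₂₂ be 2×2 complex matrices with A₁₁ positive definite and A₂₁ = A₁₂*, and let λ ∈ ℂ with Im λ ≠ 0. Then the set of 2×2 matrices M satisfying M*A₁₁M ≤ A₂₁M + M*A₁₂ - A₂₂ + (Im M)/(Im λ) (inequality of Hermitian matrices, where Im M = (M - M*)/(2i)) is bounded in operator norm. -/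
open Matrix Complex
open scoped ComplexOrder

/-!
The Im-term is absorbed into the linear part: with `c = (2i Im λ)⁻¹`, which is purely imaginary,
and `K = A₂₁ + c`, the hypothesis `A₂₁ = A₁₂*` gives `K* = A₁₂ - c`, so the defining matrix is
`K M + M* K* - A₂₂ - M* A₁₁ M`. Completing the square rewrites it as `D - X* A₁₁ X` with
`X = M - A₁₁⁻¹ K*` and `D = K A₁₁⁻¹ K* - A₂₂` independent of `M`. As `A₁₁ ≥ ε` for some `ε > 0`,
positivity of `D - X* A₁₁ X` forces `ε ‖X i j‖² ≤ Re D j j`, which bounds `X`, hence `M`.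
-/

namespace Matrix

theorem IsHermitian.completing_square {n R : Type*} [Fintype n] [DecidableEq n] [CommRing R]
    [StarRing R] {A : Matrix n n R} (hA : A.IsHermitian) (hdet : IsUnit A.det)
    (K M : Matrix n n R) :
    K * M + Mᴴ * Kᴴ - Mᴴ * A * M
      = K * A⁻¹ * Kᴴ - (M - A⁻¹ * Kᴴ)ᴴ * A * (M - A⁻¹ * Kᴴ) := by
  simp only [conjTranspose_sub, conjTranspose_mul, hA.inv.eq, conjTranspose_conjTranspose,
    sub_mul, mul_sub, Matrix.mul_assoc, mul_nonsing_inv_cancel_left _ _ hdet]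
  simp only [← Matrix.mul_assoc, Matrix.one_mul, nonsing_inv_mul _ hdet]
  abel

variable {m n 𝕜 : Type*} [RCLike 𝕜]

theorem norm_sq_le_re_conjTranspose_mul_self_apply [Fintype m] (X : Matrix m n 𝕜) (i : m)
    (j : n) : ‖X i j‖ ^ 2 ≤ RCLike.re ((Xᴴ * X) j j) := by
  have : RCLike.re ((Xᴴ * X) j j) = ∑ k, ‖X k j‖ ^ 2 := by
    simp only [mul_apply, conjTranspose_apply, RCLike.star_def, RCLike.conj_mul, map_sum]
    simp
  rw [this]
  exact Finset.single_le_sum (fun k _ ↦ sq_nonneg ‖X k j‖) (Finset.mem_univ i)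

variable [Fintype n] [DecidableEq n]

open MatrixOrder in
theorem PosDef.exists_pos_posSemidef_sub_smul_one {A : Matrix n n 𝕜} (hA : A.PosDef) :
    ∃ ε : ℝ, 0 < ε ∧ (A - (ε : 𝕜) • 1).PosSemidef := by
  cases isEmpty_or_nonempty n
  · exact ⟨1, one_pos, Subsingleton.elim 0 (A - _) ▸ .zero⟩
  obtain ⟨ε, hε, hεA⟩ := (CFC.exists_pos_algebraMap_le_iff hA.isHermitian.isSelfAdjoint).2
    fun _ hx ↦ hA.isStrictlyPositive.spectrum_pos hx
  exact ⟨ε, hε, by simpa [le_iff, Algebra.algebraMap_eq_smul_one] using hεA⟩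

theorem PosSemidef.sub_smul_conjTranspose_mul_self {A D X : Matrix n n 𝕜} {ε : ℝ}
    (hA : (A - (ε : 𝕜) • 1).PosSemidef) (hD : (D - Xᴴ * A * X).PosSemidef) :
    (D - (ε : 𝕜) • (Xᴴ * X)).PosSemidef := by
  have h := hD.add (hA.conjTranspose_mul_mul_same X)
  rwa [Matrix.mul_sub, Matrix.sub_mul, Matrix.mul_smul, Matrix.smul_mul, Matrix.mul_one,
    sub_add_sub_cancel] at h

theorem PosSemidef.norm_apply_le_sqrt {A D X : Matrix n n 𝕜} {ε : ℝ} (hε : 0 < ε)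
    (hA : (A - (ε : 𝕜) • 1).PosSemidef) (hD : (D - Xᴴ * A * X).PosSemidef) (i j : n) :
    ‖X i j‖ ≤ √(RCLike.re (D j j) / ε) := by
  have hdiag :=
    RCLike.nonneg_iff.mp ((hA.sub_smul_conjTranspose_mul_self hD).diag_nonneg (i := j))
  rw [sub_apply, smul_apply, map_sub, sub_nonneg] at hdiag
  apply Real.le_sqrt_of_sq_le
  rw [le_div_iff₀ hε]
  calc ‖X i j‖ ^ 2 * ε ≤ RCLike.re ((Xᴴ * X) j j) * ε := by
        gcongr; exact norm_sq_le_re_conjTranspose_mul_self_apply X i j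
    _ = RCLike.re ((ε : 𝕜) • (Xᴴ * X) j j) := by rw [smul_eq_mul, RCLike.re_ofReal_mul, mul_comm]
    _ ≤ RCLike.re (D j j) := hdiag.1

theorem PosDef.exists_norm_apply_le_of_posSemidef {A : Matrix n n 𝕜} (hA : A.PosDef)
    (K B : Matrix n n 𝕜) :
    ∃ R : ℝ, ∀ M : Matrix n n 𝕜, (K * M + Mᴴ * Kᴴ - B - Mᴴ * A * M).PosSemidef →
      ∀ i j, ‖M i j‖ ≤ R := by
  obtain ⟨ε, hε, hεA⟩ := hA.exists_pos_posSemidef_sub_smul_one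
  set N := A⁻¹ * Kᴴ
  set D := K * A⁻¹ * Kᴴ - B
  obtain ⟨C, hC⟩ := Finite.bddAbove_range fun j ↦ RCLike.re (D j j)
  obtain ⟨c, hc⟩ := Finite.bddAbove_range fun p : n × n ↦ ‖N p.1 p.2‖
  refine ⟨√(C / ε) + c, fun M hM i j ↦ ?_⟩
  have hX : (D - (M - N)ᴴ * A * (M - N)).PosSemidef := by
    rwa [sub_right_comm, hA.isHermitian.completing_square hA.det_pos.ne'.isUnit,
      sub_right_comm] at hM
  have hXij : ‖(M - N) i j‖ ≤ √(C / ε) :=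
    (hεA.norm_apply_le_sqrt hε hX i j).trans <|
      Real.sqrt_le_sqrt (div_le_div_of_nonneg_right (hC ⟨j, rfl⟩) hε.le)
  calc ‖M i j‖ = ‖(M - N) i j + N i j‖ := by rw [sub_apply, sub_add_cancel]
    _ ≤ ‖(M - N) i j‖ + ‖N i j‖ := norm_add_le _ _
    _ ≤ √(C / ε) + c := add_le_add hXij (hc ⟨(i, j), rfl⟩)

end Matrix

theorem weyl_disk_bounded_general
    (A₁₁ A₁₂ A₂₁ A₂₂ : Matrix (Fin 2) (Fin 2) ℂ)
    (hA₁₁ : A₁₁.PosDef) (hA : A₂₁ = A₁₂ᴴ)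
    (lam : ℂ) :
    ∃ R : ℝ, 0 < R ∧ ∀ M : Matrix (Fin 2) (Fin 2) ℂ,
      (A₂₁ * M + Mᴴ * A₁₂ - A₂₂
          + (((lam.im : ℂ)⁻¹ * (2 * Complex.I)⁻¹) • (M - Mᴴ))
          - Mᴴ * A₁₁ * M).PosSemidef →
      ∀ i j : Fin 2, ‖M i j‖ ≤ R := by
  set c : ℂ := (lam.im : ℂ)⁻¹ * (2 * Complex.I)⁻¹
  have hc : star c = -c := by simp [c]
  obtain ⟨R, hR⟩ := hA₁₁.exists_norm_apply_le_of_posSemidef (A₂₁ + c • 1) A₂₂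
  refine ⟨max R 1, by positivity, fun M hM i j ↦ (hR M ?_ i j).trans (le_max_left _ _)⟩
  have hK : (A₂₁ + c • 1)ᴴ = A₁₂ - c • 1 := by
    rw [conjTranspose_add, conjTranspose_smul, conjTranspose_one, hc, hA,
      conjTranspose_conjTranspose, neg_smul, sub_eq_add_neg]
  have hquad : A₂₁ * M + Mᴴ * A₁₂ - A₂₂ + c • (M - Mᴴ) - Mᴴ * A₁₁ * M
      = (A₂₁ + c • 1) * M + Mᴴ * (A₁₂ - c • 1) - A₂₂ - Mᴴ * A₁₁ * M := by
    rw [add_mul, mul_sub, smul_mul_assoc, Matrix.one_mul, mul_smul_comm, Matrix.mul_one, smul_sub]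
    abel
  rw [hK]
  rwa [hquad] at hM

/-- The generalized Weyl disk is bounded: if `A₁₁` is positive definite,
`A₂₁ = A₁₂*`, and `Im λ ≠ 0`, then the set of matrices `M` with
`M*A₁₁M ≤ A₂₁M + M*A₁₂ - A₂₂ + (Im M)/(Im λ)` is bounded (entrywise). -/
theorem weyl_disk_bounded
    (A₁₁ A₁₂ A₂₁ A₂₂ : Matrix (Fin 2) (Fin 2) ℂ)
    (hA₁₁ : A₁₁.PosDef) (hA : A₂₁ = A₁₂ᴴ)
    (lam : ℂ) (hlam : lam.im ≠ 0) :
    ∃ R : ℝ, 0 < R ∧ ∀ M : Matrix (Fin 2) (Fin 2) ℂ,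
      (A₂₁ * M + Mᴴ * A₁₂ - A₂₂
          + (((lam.im : ℂ)⁻¹ * (2 * Complex.I)⁻¹) • (M - Mᴴ))
          - Mᴴ * A₁₁ * M).PosSemidef →
      ∀ i j : Fin 2, ‖M i j‖ ≤ R :=
  weyl_disk_bounded_general A₁₁ A₁₂ A₂₁ A₂₂ hA₁₁ hA lam
end
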